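/- Let k ≥ 1 and τ_k: 1 → 1^{k-1}2, 2 → 1^{k-1}2·1^{k+1}, and σ_k: 1 → 1(1^{k-1}2)^k 1^k, 2 → 1(1^{k-1}2)^{2k+1} 1^k. Then for every word z over {1,2}: σ_k(1·z) = 1 · τ_k^2(z) · (1^{k-1}2)^k · 1^k. -/

import Mathlib

/-!
With `P = (1^{k-1}2)^k 1^k` we have `σ_k(1) = 1·P`, so it suffices that `P` conjugates `σ_k`
into `τ_k^2`, i.e. `P·σ_k(z) = τ_k^2(z)·P`. Both sides are morphisms in `z`, so this reduces to
the two letters, where it is a direct computation using `τ_k(1^{k-1}2) = (1^{k-1}2)^k 1^{k+1}`.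
-/

/-- The morphism `τ_k : 1 ↦ 1^{k-1}2, 2 ↦ 1^{k-1}2·1^{k+1}`. -/
def tauk (k : ℕ) : List ℕ → List ℕ := fun w =>
  w.flatMap fun c =>
    if c = 1 then List.replicate (k - 1) 1 ++ [2]
    else List.replicate (k - 1) 1 ++ [2] ++ List.replicate (k + 1) 1

/-- The morphism `σ_k : 1 ↦ 1(1^{k-1}2)^k 1^k, 2 ↦ 1(1^{k-1}2)^{2k+1} 1^k`. -/
def sigk (k : ℕ) : List ℕ → List ℕ := fun w =>
  w.flatMap fun c =>
    if c = 1 then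
      [1] ++ (List.replicate k (List.replicate (k - 1) 1 ++ [2])).flatten ++ List.replicate k 1
    else
      [1] ++ (List.replicate (2 * k + 1) (List.replicate (k - 1) 1 ++ [2])).flatten ++
        List.replicate k 1

theorem List.append_flatMap_eq_flatMap_append {α β : Type*} {f g : α → List β} {p : List β}
    (h : ∀ a, p ++ f a = g a ++ p) (l : List α) : p ++ l.flatMap f = l.flatMap g ++ p := by
  induction l with
  | nil => simp
  | cons a l ih =>
    rw [List.flatMap_cons, List.flatMap_cons, ← List.append_assoc, h a, List.append_assoc, ih,
      List.append_assoc]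

open List

namespace TaukSigk

def block (k : ℕ) : List ℕ := replicate (k - 1) 1 ++ [2]

def blockPow (k n : ℕ) : List ℕ := (replicate n (block k)).flatten

theorem blockPow_add (k m n : ℕ) : blockPow k (m + n) = blockPow k m ++ blockPow k n := by
  rw [blockPow, blockPow, blockPow, replicate_add, flatten_append]

theorem blockPow_succ (k n : ℕ) : blockPow k (n + 1) = blockPow k n ++ block k := by
  rw [blockPow_add]; simp [blockPow]

theorem tauk_append (k : ℕ) (u v : List ℕ) : tauk k (u ++ v) = tauk k u ++ tauk k v :=
  flatMap_append ..

theorem sigk_append (k : ℕ) (u v : List ℕ) : sigk k (u ++ v) = sigk k u ++ sigk k v :=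
  flatMap_append ..

theorem tauk_singleton_one (k : ℕ) : tauk k [1] = block k := by
  simp [tauk, block]

theorem tauk_singleton_of_ne_one (k : ℕ) {c : ℕ} (hc : c ≠ 1) :
    tauk k [c] = block k ++ replicate (k + 1) 1 := by
  simp [tauk, block, hc]

theorem sigk_singleton_one (k : ℕ) : sigk k [1] = [1] ++ blockPow k k ++ replicate k 1 := by
  simp [sigk, blockPow, block]

theorem sigk_singleton_of_ne_one (k : ℕ) {c : ℕ} (hc : c ≠ 1) :
    sigk k [c] = [1] ++ blockPow k (2 * k + 1) ++ replicate k 1 := by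
  simp [sigk, blockPow, block, hc]

theorem tauk_replicate_one (k n : ℕ) : tauk k (replicate n 1) = blockPow k n := by
  induction n with
  | zero => rfl
  | succ n ih => rw [replicate_succ', tauk_append, ih, tauk_singleton_one, blockPow_succ]

theorem tauk_block {k : ℕ} (hk : 1 ≤ k) :
    tauk k (block k) = blockPow k k ++ replicate (k + 1) 1 := by
  obtain ⟨m, rfl⟩ : ∃ m, k = m + 1 := ⟨k - 1, by omega⟩
  rw [block, tauk_append, tauk_replicate_one, tauk_singleton_of_ne_one _ (by decide),
    Nat.add_sub_cancel, blockPow_succ, append_assoc]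

theorem conj_sigk_singleton {k : ℕ} (hk : 1 ≤ k) (c : ℕ) :
    blockPow k k ++ replicate k 1 ++ sigk k [c] =
      tauk k (tauk k [c]) ++ (blockPow k k ++ replicate k 1) := by
  have h1 : replicate k 1 ++ [1] = replicate (k + 1) 1 := (replicate_succ' ..).symm
  by_cases hc : c = 1
  · rw [hc, sigk_singleton_one, tauk_singleton_one, tauk_block hk]
    simp only [append_assoc, ← append_assoc (replicate k 1) [1], h1]
  · rw [sigk_singleton_of_ne_one k hc, tauk_singleton_of_ne_one k hc, tauk_append, tauk_block hk,
      tauk_replicate_one, show 2 * k + 1 = (k + 1) + k by omega, blockPow_add]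
    simp only [append_assoc, ← append_assoc (replicate k 1) [1], h1]

theorem conj_sigk {k : ℕ} (hk : 1 ≤ k) (z : List ℕ) :
    blockPow k k ++ replicate k 1 ++ sigk k z =
      tauk k (tauk k z) ++ (blockPow k k ++ replicate k 1) := by
  have hsig : sigk k z = z.flatMap fun c => sigk k [c] := by simp [sigk]
  have htau : tauk k (tauk k z) = z.flatMap fun c => tauk k (tauk k [c]) := by
    simp [tauk, flatMap_assoc]
  rw [hsig, htau]
  exact append_flatMap_eq_flatMap_append (conj_sigk_singleton hk) z

end TaukSigk

open TaukSigk in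
theorem stmt_16_general (k : ℕ) (hk : 1 ≤ k) (z : List ℕ) :
    sigk k ([1] ++ z) =
      [1] ++ tauk k (tauk k z) ++
        (List.replicate k (List.replicate (k - 1) 1 ++ [2])).flatten ++
        List.replicate k 1 := by
  have h := conj_sigk hk z
  rw [sigk_append, sigk_singleton_one]
  simp only [append_assoc] at h ⊢
  rw [h]
  rfl

theorem stmt_16 (k : ℕ) (hk : 1 ≤ k) (z : List ℕ) (hz : ∀ c ∈ z, c = 1 ∨ c = 2) :
    sigk k ([1] ++ z) =
      [1] ++ tauk k (tauk k z) ++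
        (List.replicate k (List.replicate (k - 1) 1 ++ [2])).flatten ++
        List.replicate k 1 :=
  stmt_16_general k hk z
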